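/- Let $A > 0$, $\lambda > 0$, $\kappa > 0$, and suppose $E \ge e^{-\kappa}$ and $\Lambda$ is a real number with $A/\lambda + \Lambda \ge e^{-\kappa}$. Define $S_1 = \frac{A}{A + \lambda E}$ and $S_2 = \frac{A}{A + \lambda \Lambda}$. Then $|\log S_1 - \log S_2| \le e^{\kappa}\,|\Lambda - E|$. -/
import Mathlib

lemma log_diff_le (a b m : ℝ) (hm : 0 < m) (ha : m ≤ a) (hb : m ≤ b) :
    Real.log b - Real.log a ≤ |b - a| / m := by
  have ha0 : 0 < a := lt_of_lt_of_le hm ha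
  have hb0 : 0 < b := lt_of_lt_of_le hm hb
  rcases le_or_gt b a with h | h
  · have h1 : Real.log b ≤ Real.log a := Real.log_le_log hb0 h
    have h2 : 0 ≤ |b - a| / m := by positivity
    linarith
  · have h1 : Real.log b - Real.log a = Real.log (b / a) :=
      (Real.log_div hb0.ne' ha0.ne').symm
    have h2 : Real.log (b / a) ≤ b / a - 1 := Real.log_le_sub_one_of_pos (by positivity)
    have h3 : b / a - 1 = (b - a) / a := by field_simp
    have h4 : (b - a) / a ≤ (b - a) / m :=
      div_le_div_of_nonneg_left (by linarith) hm ha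
    have h5 : |b - a| = b - a := abs_of_pos (by linarith)
    rw [h5]; linarith

theorem log_score_lipschitz (A lam κ E Λ : ℝ)
    (hA : 0 < A) (hlam : 0 < lam) (hκ : 0 < κ)
    (hE : Real.exp (-κ) ≤ E) (hΛ : Real.exp (-κ) ≤ A / lam + Λ) :
    |Real.log (A / (A + lam * E)) - Real.log (A / (A + lam * Λ))| ≤
      Real.exp κ * |Λ - E| := by
  set m : ℝ := lam * Real.exp (-κ) with hm
  have hm0 : 0 < m := by positivity
  have ha : m ≤ A + lam * E := by
    have := mul_le_mul_of_nonneg_left hE hlam.le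
    nlinarith
  have hb : m ≤ A + lam * Λ := by
    have h := mul_le_mul_of_nonneg_left hΛ hlam.le
    have h2 : lam * (A / lam + Λ) = A + lam * Λ := by field_simp
    linarith [h2 ▸ h]
  have ha0 : 0 < A + lam * E := lt_of_lt_of_le hm0 ha
  have hb0 : 0 < A + lam * Λ := lt_of_lt_of_le hm0 hb
  have key : Real.log (A / (A + lam * E)) - Real.log (A / (A + lam * Λ))
      = Real.log (A + lam * Λ) - Real.log (A + lam * E) := by
    rw [Real.log_div hA.ne' ha0.ne', Real.log_div hA.ne' hb0.ne']
    ring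
  have habs : |A + lam * Λ - (A + lam * E)| = lam * |Λ - E| := by
    rw [show A + lam * Λ - (A + lam * E) = lam * (Λ - E) by ring,
      abs_mul, abs_of_pos hlam]
  have hdm : lam * |Λ - E| / m = Real.exp κ * |Λ - E| := by
    rw [hm, Real.exp_neg]
    field_simp
  rw [key, abs_sub_le_iff]
  constructor
  · have h1 := log_diff_le (A + lam * E) (A + lam * Λ) m hm0 ha hb
    rw [habs, hdm] at h1; exact h1
  · have h2 := log_diff_le (A + lam * Λ) (A + lam * E) m hm0 hb ha
    rw [abs_sub_comm, habs, hdm] at h2; exact h2
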